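/- Let m ≥ 1, let ε ≥ 0, δ ≥ 0, λ > 0 and W > 0. Let f_i, f_j, f̃_i, f̃_j be probability measures on ℝ^m and let ζ be a probability measure on ℝ^m (the noise of an additive mechanism calibrated to the approximations). Suppose: (1) for every measurable S ⊆ ℝ^m, (f̃_i ∗ ζ)(S) ≤ e^ε · (f̃_j ∗ ζ)(S) + δ; and (2) for each θ ∈ {i, j} there exists a coupling γ_θ of f_θ and f̃_θ such that ‖x − y‖₁ ≤ W for γ_θ-almost every (x, y) (i.e., the ∞-Wasserstein distance between f_θ and f̃_θ is at most W). Then the mechanism that additionally adds independent Lapₘ(W/λ) noise satisfies: for every measurable S ⊆ ℝ^m, (f_i ∗ ζ ∗ Lapₘ(W/λ))(S) ≤ e^{ε + 2λ} · (f_j ∗ ζ ∗ Lapₘ(W/λ))(S) + e^λ·δ. -/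

import Mathlib

open MeasureTheory ProbabilityTheory

/-- The Laplace measure on `ℝ^m` with scale `b`: `m` i.i.d. Laplace(`b`) coordinates. -/
noncomputable def lapPi (m : ℕ) (b : ℝ) : Measure (Fin m → ℝ) :=
  MeasureTheory.volume.withDensity
    (fun x => ENNReal.ofReal (∏ k, (1 / (2 * b)) * Real.exp (-|x k| / b)))

/-- Convolution of two measures on `ℝ^m`: the law of `X + Z` with `X ∼ μ`, `Z ∼ ν` independent. -/
noncomputable def mconv {m : ℕ} (μ ν : Measure (Fin m → ℝ)) : Measure (Fin m → ℝ) :=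
  (μ.prod ν).map (fun p => p.1 + p.2)

/-- The `L¹` norm on `ℝ^m`. -/
def l1norm {m : ℕ} (x : Fin m → ℝ) : ℝ := ∑ k, |x k|

/-- `γ` is a coupling of `μ` and `ν`. -/
def IsCoupling {m : ℕ} (γ : Measure ((Fin m → ℝ) × (Fin m → ℝ)))
    (μ ν : Measure (Fin m → ℝ)) : Prop :=
  γ.map Prod.fst = μ ∧ γ.map Prod.snd = ν

open Set Real
open scoped ENNReal

/-!
Write `L` for `Lapₘ(W/λ)`. Translating `L` by a vector of `ℓ¹`-norm at most `W` changes its density,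
and hence the mass of every set, by a factor at most `e^λ`, and convolving with `ζ` keeps this.
Integrating against a `W`-close coupling of `f_θ` and `f̃_θ` therefore gives
`(f_θ ∗ ζ ∗ L)(S) ≤ e^λ (f̃_θ ∗ ζ ∗ L)(S)`, and the reverse inequality via the swapped coupling.
Convolving the hypothesis on `f̃ᵢ ∗ ζ`, `f̃ⱼ ∗ ζ` with the probability measure `L` preserves it, so
chaining `fᵢ → f̃ᵢ → f̃ⱼ → fⱼ` gives the factor `e^{ε + 2λ}` and the slack `e^λ δ`.
-/

theorem measurable_measure_preimage_add_left {G : Type*} [MeasurableSpace G] [AddMonoid G]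
    [MeasurableAdd₂ G] (ν : Measure G) [SFinite ν] {S : Set G} (hS : MeasurableSet S) :
    Measurable fun x ↦ ν ((x + ·) ⁻¹' S) :=
  measurable_measure_prodMk_left (hS.preimage measurable_add)

namespace MeasureTheory.Measure

variable {G : Type*} [MeasurableSpace G]

theorem conv_apply [AddMonoid G] [MeasurableAdd₂ G] (μ ν : Measure G) [SFinite ν]
    {S : Set G} (hS : MeasurableSet S) : (μ ∗ ν) S = ∫⁻ x, ν ((x + ·) ⁻¹' S) ∂μ := by
  rw [conv, map_apply measurable_add hS, prod_apply (hS.preimage measurable_add)]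
  rfl

theorem conv_apply_le_of_forall_le [AddCommMonoid G] [MeasurableAdd₂ G]
    {μ ν κ : Measure G} [SFinite μ] [SFinite ν] [IsProbabilityMeasure κ] {c d : ℝ≥0∞}
    (h : ∀ S, MeasurableSet S → μ S ≤ c * ν S + d) {S : Set G} (hS : MeasurableSet S) :
    (μ ∗ κ) S ≤ c * (ν ∗ κ) S + d := by
  rw [conv_comm μ, conv_comm ν, conv_apply _ _ hS, conv_apply _ _ hS]
  calc ∫⁻ w, μ ((w + ·) ⁻¹' S) ∂κ ≤ ∫⁻ w, (c * ν ((w + ·) ⁻¹' S) + d) ∂κ :=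
        lintegral_mono fun w ↦ h _ (hS.preimage (measurable_const_add w))
    _ = c * ∫⁻ w, ν ((w + ·) ⁻¹' S) ∂κ + d := by
        rw [lintegral_add_right _ measurable_const,
          lintegral_const_mul _ (measurable_measure_preimage_add_left ν hS), lintegral_const,
          measure_univ, mul_one]

end MeasureTheory.Measure

theorem lintegral_le_of_map_fst_map_snd {α : Type*} [MeasurableSpace α] {γ : Measure (α × α)}
    {g : α → ℝ≥0∞} (hg : Measurable g) {c : ℝ≥0∞} (h : ∀ᵐ p ∂γ, g p.1 ≤ c * g p.2) :
    ∫⁻ x, g x ∂(γ.map Prod.fst) ≤ c * ∫⁻ x, g x ∂(γ.map Prod.snd) := by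
  rw [lintegral_map hg measurable_fst, lintegral_map hg measurable_snd]
  exact (lintegral_mono_ae h).trans_eq (lintegral_const_mul c (hg.comp measurable_snd))

theorem withDensity_preimage_add_le {G : Type*} [MeasurableSpace G] [AddCommGroup G]
    [MeasurableAdd G] {μ : Measure G} [μ.IsAddRightInvariant] {ρ : G → ℝ≥0∞} {t : G} {c : ℝ≥0∞}
    (hc : c ≠ ∞) (h : ∀ u, ρ (u - t) ≤ c * ρ u) {S : Set G} (hS : MeasurableSet S) :
    μ.withDensity ρ ((t + ·) ⁻¹' S) ≤ c * μ.withDensity ρ S := by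
  have hSt : MeasurableSet ((t + ·) ⁻¹' S) := hS.preimage (measurable_const_add t)
  rw [withDensity_apply _ hSt, withDensity_apply _ hS, ← lintegral_indicator hSt,
    ← lintegral_indicator hS]
  calc ∫⁻ u, ((t + ·) ⁻¹' S).indicator ρ u ∂μ
      = ∫⁻ u, ((t + ·) ⁻¹' S).indicator ρ (u - t) ∂μ := (lintegral_sub_right_eq_self _ t).symm
    _ ≤ ∫⁻ u, c * S.indicator ρ u ∂μ := lintegral_mono fun u ↦ by
        have hmem : u - t ∈ (t + ·) ⁻¹' S ↔ u ∈ S := by simp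
        by_cases hu : u ∈ S
        · rw [indicator_of_mem (hmem.2 hu), indicator_of_mem hu]
          exact h u
        · rw [indicator_of_notMem (mt hmem.1 hu)]
          exact zero_le
    _ = c * ∫⁻ u, S.indicator ρ u ∂μ := lintegral_const_mul' _ _ hc

variable {m : ℕ}

theorem mconv_eq_conv (μ ν : Measure (Fin m → ℝ)) : mconv μ ν = μ ∗ ν := rfl

theorem l1norm_sub_comm (x y : Fin m → ℝ) : l1norm (x - y) = l1norm (y - x) := by
  simp only [l1norm, Pi.sub_apply, abs_sub_comm]

/-- `W∞(μ, ν) ≤ W` for the `ℓ¹` distance on `ℝ^m`. -/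
def WassersteinInftyLE (μ ν : Measure (Fin m → ℝ)) (W : ℝ) : Prop :=
  ∃ γ : Measure ((Fin m → ℝ) × (Fin m → ℝ)), IsCoupling γ μ ν ∧ ∀ᵐ xy ∂γ, l1norm (xy.1 - xy.2) ≤ W

theorem WassersteinInftyLE.symm {μ ν : Measure (Fin m → ℝ)} {W : ℝ}
    (h : WassersteinInftyLE μ ν W) : WassersteinInftyLE ν μ W := by
  obtain ⟨γ, ⟨hμ, hν⟩, hW⟩ := h
  refine ⟨γ.map Prod.swap, ⟨?_, ?_⟩, ?_⟩
  · rwa [Measure.map_map measurable_fst measurable_swap]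
  · rwa [Measure.map_map measurable_snd measurable_swap]
  · refine MeasurableEquiv.prodComm.measurableEmbedding.ae_map_iff.2 ?_
    filter_upwards [hW] with p hp
    rwa [l1norm_sub_comm] at hp

def IsShiftStable (η : Measure (Fin m → ℝ)) (W : ℝ) (c : ℝ≥0∞) : Prop :=
  ∀ t, l1norm t ≤ W → ∀ A, MeasurableSet A → η ((t + ·) ⁻¹' A) ≤ c * η A

theorem IsShiftStable.conv {η : Measure (Fin m → ℝ)} [SFinite η] {W : ℝ} {c : ℝ≥0∞}
    (hη : IsShiftStable η W c) (ζ : Measure (Fin m → ℝ)) : IsShiftStable (ζ ∗ η) W c := by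
  intro t ht A hA
  rw [Measure.conv_apply _ _ (hA.preimage (measurable_const_add t)), Measure.conv_apply _ _ hA,
    ← lintegral_const_mul _ (measurable_measure_preimage_add_left η hA)]
  refine lintegral_mono fun z ↦ ?_
  have hshift : (z + ·) ⁻¹' ((t + ·) ⁻¹' A) = (t + ·) ⁻¹' ((z + ·) ⁻¹' A) := by
    ext w
    simp only [mem_preimage, add_left_comm]
  rw [hshift]
  exact hη t ht _ (hA.preimage (measurable_const_add z))

theorem IsShiftStable.conv_apply_le {η : Measure (Fin m → ℝ)} [SFinite η] {W : ℝ} {c : ℝ≥0∞}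
    (hη : IsShiftStable η W c) {μ ν : Measure (Fin m → ℝ)} (hμν : WassersteinInftyLE μ ν W)
    {S : Set (Fin m → ℝ)} (hS : MeasurableSet S) : (μ ∗ η) S ≤ c * (ν ∗ η) S := by
  obtain ⟨γ, ⟨rfl, rfl⟩, hW⟩ := hμν
  rw [Measure.conv_apply _ _ hS, Measure.conv_apply _ _ hS]
  refine lintegral_le_of_map_fst_map_snd (measurable_measure_preimage_add_left η hS) ?_
  filter_upwards [hW] with p hp
  have hshift : (p.1 + ·) ⁻¹' S = (p.1 - p.2 + ·) ⁻¹' ((p.2 + ·) ⁻¹' S) := by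
    ext w
    simp only [mem_preimage, ← add_assoc, add_sub_cancel]
  rw [hshift]
  exact hη _ hp _ (hS.preimage (measurable_const_add _))

noncomputable def laplacePDF (b t : ℝ) : ℝ := 1 / (2 * b) * exp (-|t| / b)

theorem lapPi_eq_withDensity (m : ℕ) (b : ℝ) :
    lapPi m b = volume.withDensity fun x ↦ ENNReal.ofReal (∏ k, laplacePDF b (x k)) := rfl

theorem laplacePDF_nonneg {b : ℝ} (hb : 0 ≤ b) (t : ℝ) : 0 ≤ laplacePDF b t := by
  unfold laplacePDF
  positivity

theorem laplacePDF_sub_le {b : ℝ} (hb : 0 ≤ b) (u t : ℝ) :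
    laplacePDF b (u - t) ≤ exp (|t| / b) * laplacePDF b u := by
  have hexp : -|u - t| / b ≤ |t| / b + -|u| / b := by
    rw [← add_div]
    gcongr
    linarith [abs_sub_abs_le_abs_sub u t]
  calc laplacePDF b (u - t) ≤ 1 / (2 * b) * exp (|t| / b + -|u| / b) := by
        unfold laplacePDF
        gcongr
    _ = exp (|t| / b) * laplacePDF b u := by
        rw [laplacePDF, exp_add]
        ring

theorem integral_laplacePDF {b : ℝ} (hb : 0 < b) : ∫ t, laplacePDF b t = 1 := by
  have hIoi : ∫ t in Ioi (0 : ℝ), exp (-t / b) = b := by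
    have hlin : ∀ t, -t / b = -b⁻¹ * t := fun t ↦ by ring
    simp_rw [hlin]
    rw [integral_exp_mul_Ioi (by simpa using hb) 0]
    simp
  unfold laplacePDF
  rw [integral_const_mul, integral_comp_abs (f := fun t ↦ exp (-t / b)), hIoi]
  field_simp

theorem isProbabilityMeasure_lapPi {b : ℝ} (hb : 0 < b) : IsProbabilityMeasure (lapPi m b) := by
  have hint : Integrable fun x : Fin m → ℝ ↦ ∏ k, laplacePDF b (x k) :=
    Integrable.fintype_prod fun _ ↦ integrable_of_integral_eq_one (integral_laplacePDF hb)
  constructor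
  rw [lapPi_eq_withDensity, withDensity_apply _ MeasurableSet.univ, Measure.restrict_univ,
    ← ofReal_integral_eq_lintegral_ofReal hint
      (Filter.Eventually.of_forall fun x ↦ Finset.prod_nonneg fun k _ ↦ laplacePDF_nonneg hb.le _),
    integral_fintype_prod_volume_eq_prod (fun _ ↦ laplacePDF b)]
  simp [integral_laplacePDF hb]

theorem lapPi_preimage_add_le {b : ℝ} (hb : 0 ≤ b) (t : Fin m → ℝ) {S : Set (Fin m → ℝ)}
    (hS : MeasurableSet S) :
    lapPi m b ((t + ·) ⁻¹' S) ≤ ENNReal.ofReal (exp (l1norm t / b)) * lapPi m b S := by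
  refine withDensity_preimage_add_le ENNReal.ofReal_ne_top (fun u ↦ ?_) hS
  rw [← ENNReal.ofReal_mul (exp_nonneg _)]
  refine ENNReal.ofReal_le_ofReal ?_
  calc ∏ k, laplacePDF b ((u - t) k) ≤ ∏ k, exp (|t k| / b) * laplacePDF b (u k) :=
        Finset.prod_le_prod (fun k _ ↦ laplacePDF_nonneg hb _)
          (fun k _ ↦ laplacePDF_sub_le hb _ _)
    _ = exp (l1norm t / b) * ∏ k, laplacePDF b (u k) := by
        rw [Finset.prod_mul_distrib, ← exp_sum, l1norm, Finset.sum_div]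

theorem isShiftStable_lapPi {b : ℝ} (hb : 0 ≤ b) (W : ℝ) :
    IsShiftStable (lapPi m b) W (ENNReal.ofReal (exp (W / b))) := by
  intro t ht A hA
  refine (lapPi_preimage_add_le hb t hA).trans ?_
  gcongr

theorem privacy_under_wasserstein_approximations_general
    (m : ℕ)
    (ε δ lam W : ℝ) (hlam : 0 < lam) (hW : 0 < W)
    (fi fj fti ftj : Measure (Fin m → ℝ)) (ζ : Measure (Fin m → ℝ))
    (hfti : IsProbabilityMeasure fti) (hftj : IsProbabilityMeasure ftj)
    (hζ : IsProbabilityMeasure ζ)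
    (h1 : ∀ S : Set (Fin m → ℝ), MeasurableSet S →
      mconv fti ζ S ≤ ENNReal.ofReal (Real.exp ε) * mconv ftj ζ S
        + ENNReal.ofReal δ)
    (h2i : ∃ γ : Measure ((Fin m → ℝ) × (Fin m → ℝ)),
      IsCoupling γ fi fti ∧ ∀ᵐ xy ∂γ, l1norm (xy.1 - xy.2) ≤ W)
    (h2j : ∃ γ : Measure ((Fin m → ℝ) × (Fin m → ℝ)),
      IsCoupling γ fj ftj ∧ ∀ᵐ xy ∂γ, l1norm (xy.1 - xy.2) ≤ W) :
    ∀ S : Set (Fin m → ℝ), MeasurableSet S →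
      mconv (mconv fi ζ) (lapPi m (W / lam)) S
        ≤ ENNReal.ofReal (Real.exp (ε + 2 * lam))
            * mconv (mconv fj ζ) (lapPi m (W / lam)) S
          + ENNReal.ofReal (Real.exp lam * δ) := by
  intro S hS
  set L := lapPi m (W / lam)
  have hb : 0 < W / lam := div_pos hW hlam
  have hL : IsProbabilityMeasure L := isProbabilityMeasure_lapPi hb
  have hstable : IsShiftStable (ζ ∗ L) W (ENNReal.ofReal (exp lam)) := by
    simpa only [div_div_cancel₀ hW.ne'] using (isShiftStable_lapPi (m := m) hb.le W).conv ζ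
  have hfi_le := hstable.conv_apply_le h2i hS
  have hftj_le := hstable.conv_apply_le (WassersteinInftyLE.symm h2j) hS
  have hft_le :=
    Measure.conv_apply_le_of_forall_le (μ := fti ∗ ζ) (ν := ftj ∗ ζ) (κ := L) h1 hS
  simp only [mconv_eq_conv, Measure.conv_assoc] at hft_le ⊢
  calc (fi ∗ ζ ∗ L) S
      ≤ ENNReal.ofReal (exp lam) * (fti ∗ ζ ∗ L) S := hfi_le
    _ ≤ ENNReal.ofReal (exp lam)
          * (ENNReal.ofReal (exp ε) * (ftj ∗ ζ ∗ L) S + ENNReal.ofReal δ) := by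
        gcongr
    _ ≤ ENNReal.ofReal (exp lam) * (ENNReal.ofReal (exp ε)
          * (ENNReal.ofReal (exp lam) * (fj ∗ ζ ∗ L) S) + ENNReal.ofReal δ) := by
        gcongr
    _ = ENNReal.ofReal (exp (ε + 2 * lam)) * (fj ∗ ζ ∗ L) S
          + ENNReal.ofReal (exp lam * δ) := by
        rw [show exp (ε + 2 * lam) = exp lam * exp ε * exp lam by
              rw [← exp_add, ← exp_add]; ring_nf,
          ENNReal.ofReal_mul (by positivity), ENNReal.ofReal_mul (by positivity),
          ENNReal.ofReal_mul (exp_pos lam).le]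
        ring

/-- **Privacy under approximations with Wasserstein distance** (Theorem 4.7): if the
additive-noise mechanism with noise `ζ` is `(ε, δ)`-private for the approximating
distributions `f̃ᵢ, f̃ⱼ`, and each true distribution `f_θ` is within `∞`-Wasserstein
distance `W` of its approximation `f̃_θ`, then additionally adding independent
`Lapₘ(W/λ)` noise yields `(ε + 2λ, e^λ δ)`-privacy for the true distributions. -/
theorem privacy_under_wasserstein_approximations
    (m : ℕ) (hm : 1 ≤ m)
    (ε δ lam W : ℝ) (hε : 0 ≤ ε) (hδ : 0 ≤ δ) (hlam : 0 < lam) (hW : 0 < W)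
    (fi fj fti ftj : Measure (Fin m → ℝ)) (ζ : Measure (Fin m → ℝ))
    (hfi : IsProbabilityMeasure fi) (hfj : IsProbabilityMeasure fj)
    (hfti : IsProbabilityMeasure fti) (hftj : IsProbabilityMeasure ftj)
    (hζ : IsProbabilityMeasure ζ)
    (h1 : ∀ S : Set (Fin m → ℝ), MeasurableSet S →
      mconv fti ζ S ≤ ENNReal.ofReal (Real.exp ε) * mconv ftj ζ S
        + ENNReal.ofReal δ)
    (h2i : ∃ γ : Measure ((Fin m → ℝ) × (Fin m → ℝ)),
      IsCoupling γ fi fti ∧ ∀ᵐ xy ∂γ, l1norm (xy.1 - xy.2) ≤ W)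
    (h2j : ∃ γ : Measure ((Fin m → ℝ) × (Fin m → ℝ)),
      IsCoupling γ fj ftj ∧ ∀ᵐ xy ∂γ, l1norm (xy.1 - xy.2) ≤ W) :
    ∀ S : Set (Fin m → ℝ), MeasurableSet S →
      mconv (mconv fi ζ) (lapPi m (W / lam)) S
        ≤ ENNReal.ofReal (Real.exp (ε + 2 * lam))
            * mconv (mconv fj ζ) (lapPi m (W / lam)) S
          + ENNReal.ofReal (Real.exp lam * δ) :=
  privacy_under_wasserstein_approximations_general m ε δ lam W hlam hW fi fj fti ftj ζ hfti hftj hζ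
    h1 h2i h2j
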